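/- The van der Corput sequence in base 2 is a best-discrepancy sequence: there exists a constant c > 0 such that for every integer N ≥ 2, the discrepancy of its first N terms satisfies D_N ≤ c·N^(−1)·log N; in particular, for every ε > 0 there is a constant c' > 0 with D_N ≤ c'·N^(−1+ε) for all N ≥ 1. -/

import Mathlib

open scoped Classical

/-- The discrepancy `D_N` of the first `N` terms (indices `1,…,N`) of a sequence
`x : ℕ → ℝ` in `[0,1)`:  `D_N = sup_{0 ≤ a < b < 1} | C([a,b);N)/N − (b−a) |`. -/
noncomputable def discrepancy (x : ℕ → ℝ) (N : ℕ) : ℝ :=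
  sSup {t : ℝ | ∃ a b : ℝ, 0 ≤ a ∧ a < b ∧ b < 1 ∧
    t = |(((Finset.Icc 1 N).filter (fun n => x n ∈ Set.Ico a b)).card : ℝ) / N - (b - a)|}

/-- The van der Corput sequence in base 2: if `n = Σ_j a_j · 2^j` with binary digits
`a_j ∈ {0,1}`, then `x_n = Σ_j a_j · 2^(−j−1)` (binary digit reversal). -/
noncomputable def vanDerCorput (n : ℕ) : ℝ :=
  ∑ j ∈ Finset.range (Nat.digits 2 n).length,
    ((Nat.digits 2 n).getD j 0 : ℝ) / 2 ^ (j + 1)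

/-!
Since `2^k · x_n = bitRev k (n mod 2^k) + x_{⌊n/2^k⌋}` with `x_{⌊n/2^k⌋} ∈ [0,1)`, the point
`x_n` lies in the dyadic interval `[m/2^k, (m+1)/2^k)` exactly when `n mod 2^k` is the bit
reversal of `m`. Bit reversal permutes `[0, 2^k)`, so each dyadic interval of length `2^-k`
receives the `n ≤ N` of one residue class mod `2^k`: that is `N/2^k` points up to an error of one.
Peeling off the binary digits of `m` splits `[0, m/2^k)` into at most `k` dyadic intervals, so
every interval `[0, b)` has counting error at most `k + N/2^k`, and `2^k ≈ N` gives
`D_N = O(log N / N)`.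
-/

open Set

section DyadicCounting

variable (x : ℕ → ℝ) (N : ℕ)

noncomputable def pointCount (s : Set ℝ) : ℕ :=
  ((Finset.Icc 1 N).filter (fun n => x n ∈ s)).card

def DyadicallyBalanced : Prop :=
  ∀ k m : ℕ, m < 2 ^ k →
    |(pointCount x N (Ico (m / 2 ^ k) ((m + 1) / 2 ^ k)) : ℝ) - N / 2 ^ k| ≤ 1

variable {x N}

theorem pointCount_union {s t : Set ℝ} (hst : Disjoint s t) :
    pointCount x N (s ∪ t) = pointCount x N s + pointCount x N t := by
  simp only [pointCount, Set.mem_union]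
  rw [Finset.filter_or, Finset.card_union_of_disjoint]
  exact Finset.disjoint_filter.2 fun n _ hs ht => hst.ne_of_mem hs ht rfl

theorem pointCount_mono {s t : Set ℝ} (hst : s ⊆ t) : pointCount x N s ≤ pointCount x N t :=
  Finset.card_le_card (Finset.monotone_filter_right _ fun _ _ h => hst h)

theorem pointCount_Iio_add_pointCount_Ico {a b : ℝ} (hab : a ≤ b) :
    pointCount x N (Iio a) + pointCount x N (Ico a b) = pointCount x N (Iio b) := by
  rw [← pointCount_union ((Iio_disjoint_Ici le_rfl).mono_right Ico_subset_Ici_self),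
    Iio_union_Ico_eq_Iio hab]

variable (hx : ∀ n, x n ∈ Ico 0 1) (hbal : DyadicallyBalanced x N)
include hx hbal

theorem abs_pointCount_Iio_dyadic_sub_le :
    ∀ k m : ℕ, m ≤ 2 ^ k →
      |(pointCount x N (Iio (m / 2 ^ k)) : ℝ) - N * (m / 2 ^ k)| ≤ k
  | 0, m, hm => by
    interval_cases m
    · have : pointCount x N (Iio 0) = 0 :=
        Finset.card_filter_eq_zero_iff.2 fun n _ => not_lt.2 (hx n).1
      simp [this]
    · have : pointCount x N (Iio 1) = N :=
        (Finset.card_filter_eq_iff.2 fun n _ => (hx n).2).trans (Nat.card_Icc 1 N)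
      simp [this]
  | k + 1, m, hm => by
    obtain ⟨m, hparity⟩ := Nat.even_or_odd' m
    have hlevel : ((2 * m : ℕ) : ℝ) / 2 ^ (k + 1) = m / 2 ^ k := by
      push_cast; ring
    rcases hparity with rfl | rfl
    · have := abs_pointCount_Iio_dyadic_sub_le k m (by omega)
      rw [hlevel]
      push_cast
      linarith
    · have hodd : ((2 * m + 1 : ℕ) : ℝ) = (2 * m : ℕ) + 1 := by push_cast; ring
      have hmean : (N : ℝ) * (((2 * m : ℕ) + 1) / 2 ^ (k + 1))
          = N * (m / 2 ^ k) + N / 2 ^ (k + 1) := by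
        push_cast; ring
      have hsplit := pointCount_Iio_add_pointCount_Ico (x := x) (N := N)
        (a := ((2 * m : ℕ) : ℝ) / 2 ^ (k + 1)) (b := (((2 * m : ℕ) : ℝ) + 1) / 2 ^ (k + 1))
        (by gcongr; linarith)
      have hcoarse := abs_pointCount_Iio_dyadic_sub_le k m (by omega)
      have hdyadic := hbal (k + 1) (2 * m) (by omega)
      rw [hlevel] at hsplit hdyadic
      rw [hodd, hmean, ← hsplit, Nat.cast_add, Nat.cast_succ]
      rw [abs_le] at *
      constructor <;> linarith

theorem abs_pointCount_Iio_sub_le (k : ℕ) {b : ℝ} (hb : b ∈ Ico 0 1) :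
    |(pointCount x N (Iio b) : ℝ) - N * b| ≤ k + N / 2 ^ k := by
  have hb0 : 0 ≤ b * 2 ^ k := mul_nonneg hb.1 (by positivity)
  set m := ⌊b * 2 ^ k⌋₊
  have hm_le : (m : ℝ) / 2 ^ k ≤ b := (div_le_iff₀ (by positivity)).2 (Nat.floor_le hb0)
  have hlt_succ : b < ((m + 1 : ℕ) : ℝ) / 2 ^ k :=
    (lt_div_iff₀ (by positivity)).2 (by push_cast; exact Nat.lt_floor_add_one _)
  have hm : m < 2 ^ k :=
    (Nat.floor_lt hb0).2 (by push_cast; exact mul_lt_of_lt_one_left (by positivity) hb.2)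
  have hlower := abs_pointCount_Iio_dyadic_sub_le hx hbal k m hm.le
  have hupper := abs_pointCount_Iio_dyadic_sub_le hx hbal k (m + 1) hm
  have hmono_lower : (pointCount x N (Iio (m / 2 ^ k)) : ℝ) ≤ pointCount x N (Iio b) := by
    exact_mod_cast pointCount_mono (Iio_subset_Iio hm_le)
  have hmono_upper :
      (pointCount x N (Iio b) : ℝ) ≤ pointCount x N (Iio ((m + 1 : ℕ) / 2 ^ k)) := by
    exact_mod_cast pointCount_mono (Iio_subset_Iio hlt_succ.le)
  have hmean_lower : (N : ℝ) * (m / 2 ^ k) ≤ N * b := by gcongr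
  have hmean_upper : (N : ℝ) * b ≤ N * ((m + 1 : ℕ) / 2 ^ k) := by gcongr
  have hmean_gap : (N : ℝ) * ((m + 1 : ℕ) / 2 ^ k) = N * (m / 2 ^ k) + N / 2 ^ k := by
    push_cast; ring
  rw [abs_le] at *
  constructor <;> linarith

theorem abs_pointCount_Ico_sub_le (k : ℕ) {a b : ℝ} (ha : 0 ≤ a) (hab : a ≤ b)
    (hb : b < 1) :
    |(pointCount x N (Ico a b) : ℝ) - N * (b - a)| ≤ 2 * (k + N / 2 ^ k) := by
  have hsplit :
      (pointCount x N (Ico a b) : ℝ) = pointCount x N (Iio b) - pointCount x N (Iio a) := by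
    rw [← pointCount_Iio_add_pointCount_Ico hab, Nat.cast_add]; ring
  have hb' := abs_pointCount_Iio_sub_le hx hbal k ⟨ha.trans hab, hb⟩
  have ha' := abs_pointCount_Iio_sub_le hx hbal k ⟨ha, hab.trans_lt hb⟩
  calc |(pointCount x N (Ico a b) : ℝ) - N * (b - a)|
      = |((pointCount x N (Iio b) : ℝ) - N * b) - ((pointCount x N (Iio a) : ℝ) - N * a)| := by
        rw [hsplit]; ring_nf
    _ ≤ _ := abs_sub _ _
    _ ≤ 2 * (k + N / 2 ^ k) := by linarith

theorem discrepancy_le_of_dyadicallyBalanced (hN : 0 < N) (k : ℕ) :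
    discrepancy x N ≤ 2 * (k + N / 2 ^ k) / N := by
  refine Real.sSup_le ?_ (by positivity)
  rintro t ⟨a, b, ha, hab, hb, rfl⟩
  have hN' : (0 : ℝ) < N := by exact_mod_cast hN
  -- the two filters differ only in their `Decidable` instances
  have hcount :
      ((Finset.Icc 1 N).filter fun n => x n ∈ Ico a b).card = pointCount x N (Ico a b) := by
    unfold pointCount; congr
  rw [hcount]
  calc |(pointCount x N (Ico a b) : ℝ) / N - (b - a)|
      = |(pointCount x N (Ico a b) : ℝ) - N * (b - a)| / N := by
        rw [← abs_of_pos hN', ← abs_div, abs_of_pos hN', sub_div,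
          mul_div_cancel_left₀ _ hN'.ne']
    _ ≤ 2 * (k + N / 2 ^ k) / N := by
        gcongr; exact abs_pointCount_Ico_sub_le hx hbal k ha hab.le hb

end DyadicCounting

theorem vanDerCorput_zero : vanDerCorput 0 = 0 := by simp [vanDerCorput]

theorem vanDerCorput_eq_mod_two_add (n : ℕ) :
    vanDerCorput n = ((n % 2 : ℕ) + vanDerCorput (n / 2)) / 2 := by
  rcases n.eq_zero_or_pos with rfl | hn
  · simp [vanDerCorput_zero]
  rw [vanDerCorput, Nat.digits_def' one_lt_two hn, List.length_cons, Finset.sum_range_succ']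
  simp only [List.getD_cons_succ, List.getD_cons_zero, vanDerCorput, pow_succ]
  rw [add_div, add_comm, Finset.sum_div]
  congr 1
  · ring
  · exact Finset.sum_congr rfl fun j _ => by ring

theorem vanDerCorput_mem_Ico (n : ℕ) : vanDerCorput n ∈ Ico 0 1 := by
  induction n using Nat.strong_induction_on with
  | _ n ih =>
    rcases n.eq_zero_or_pos with rfl | hn
    · simp [vanDerCorput_zero]
    have hhigh := ih (n / 2) (Nat.div_lt_self hn one_lt_two)
    have hbit : ((n % 2 : ℕ) : ℝ) ≤ 1 := by
      exact_mod_cast Nat.le_of_lt_succ (Nat.mod_lt n two_pos)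
    rw [vanDerCorput_eq_mod_two_add, mem_Ico]
    constructor
    · linarith [hhigh.1, Nat.cast_nonneg (α := ℝ) (n % 2)]
    · linarith [hhigh.2]

theorem vanDerCorput_injective : Function.Injective vanDerCorput := by
  intro r s h
  induction hrs : r + s using Nat.strong_induction_on generalizing r s with
  | _ t ih =>
    rcases Nat.eq_zero_or_pos t with rfl | ht
    · omega
    rw [vanDerCorput_eq_mod_two_add r, vanDerCorput_eq_mod_two_add s] at h
    have hr := vanDerCorput_mem_Ico (r / 2)
    have hs := vanDerCorput_mem_Ico (s / 2)
    -- the lowest binary digit of `n` decides which half of `[0, 1)` contains `vanDerCorput n`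
    have hbit : r % 2 = s % 2 := by
      rcases Nat.mod_two_eq_zero_or_one r with hr2 | hr2 <;>
        rcases Nat.mod_two_eq_zero_or_one s with hs2 | hs2 <;>
        simp only [hr2, hs2, Nat.cast_zero, Nat.cast_one] at h ⊢ <;>
        linarith [hr.1, hr.2, hs.1, hs.2]
    have hhigh : r / 2 = s / 2 :=
      ih (r / 2 + s / 2) (by omega) (by rw [hbit] at h; linarith) rfl
    omega

def bitRev : ℕ → ℕ → ℕ
  | 0, _ => 0
  | k + 1, r => r % 2 * 2 ^ k + bitRev k (r / 2)

theorem two_pow_mul_vanDerCorput (k n : ℕ) :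
    2 ^ k * vanDerCorput n = bitRev k (n % 2 ^ k) + vanDerCorput (n / 2 ^ k) := by
  induction k generalizing n with
  | zero => simp [bitRev]
  | succ k ih =>
    have hbit : n % 2 ^ (k + 1) % 2 = n % 2 :=
      Nat.mod_mod_of_dvd _ (dvd_pow_self 2 k.succ_ne_zero)
    have hhigh : n % 2 ^ (k + 1) / 2 = n / 2 % 2 ^ k := by
      rw [pow_succ', Nat.mod_mul_right_div_self]
    have hquot : n / 2 / 2 ^ k = n / 2 ^ (k + 1) := by
      rw [Nat.div_div_eq_div_mul, pow_succ']
    rw [bitRev, hbit, hhigh, ← hquot, vanDerCorput_eq_mod_two_add n]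
    push_cast
    linear_combination ih (n / 2)

theorem floor_two_pow_mul_vanDerCorput (k n : ℕ) :
    ⌊2 ^ k * vanDerCorput n⌋₊ = bitRev k (n % 2 ^ k) := by
  have hhigh := vanDerCorput_mem_Ico (n / 2 ^ k)
  rw [two_pow_mul_vanDerCorput, Nat.floor_eq_iff (by positivity [hhigh.1])]
  constructor <;> linarith [hhigh.1, hhigh.2]

theorem vanDerCorput_mem_dyadic_Ico_iff (k n m : ℕ) :
    vanDerCorput n ∈ Ico ((m : ℝ) / 2 ^ k) ((m + 1) / 2 ^ k) ↔ bitRev k (n % 2 ^ k) = m := by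
  rw [← floor_two_pow_mul_vanDerCorput,
    Nat.floor_eq_iff (mul_nonneg (by positivity) (vanDerCorput_mem_Ico n).1), mem_Ico,
    div_le_iff₀' (by positivity), lt_div_iff₀' (by positivity)]

theorem cast_bitRev_of_lt {k r : ℕ} (hr : r < 2 ^ k) :
    (bitRev k r : ℝ) = 2 ^ k * vanDerCorput r := by
  rw [two_pow_mul_vanDerCorput, Nat.mod_eq_of_lt hr, Nat.div_eq_of_lt hr, vanDerCorput_zero,
    add_zero]

theorem bitRev_bijOn (k : ℕ) : BijOn (bitRev k) (Iio (2 ^ k)) (Iio (2 ^ k)) := by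
  have hmaps : MapsTo (bitRev k) (Iio (2 ^ k)) (Iio (2 ^ k)) := fun r hr => by
    have hlt : (bitRev k r : ℝ) < 2 ^ k := by
      rw [cast_bitRev_of_lt hr]
      have := (vanDerCorput_mem_Ico r).2
      nlinarith [pow_pos (two_pos (α := ℝ)) k]
    exact_mod_cast hlt
  refine ((finite_Iio _).injOn_iff_bijOn_of_mapsTo hmaps).1 fun r hr s hs h => ?_
  refine vanDerCorput_injective (mul_left_cancel₀ (pow_ne_zero k two_ne_zero) ?_)
  rw [← cast_bitRev_of_lt hr, ← cast_bitRev_of_lt hs, h]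

theorem abs_card_filter_mod_eq_sub_div_le (N : ℕ) {M r : ℕ} (hr : r < M) :
    |(((Finset.Icc 1 N).filter (fun n => n % M = r)).card : ℝ) - N / M| ≤ 1 := by
  have hcount := Nat.Ioc_filter_modEq_card 0 N (r.zero_le.trans_lt hr) r
  have hfilter : (Finset.Ioc 0 N).filter (· ≡ r [MOD M])
      = (Finset.Icc 1 N).filter (fun n => n % M = r) := by
    rw [← Finset.Icc_add_one_left_eq_Ioc]
    exact Finset.filter_congr fun n _ => by rw [Nat.ModEq, Nat.mod_eq_of_lt hr]
  rw [hfilter] at hcount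
  set D := ⌊((N : ℚ) - r) / M⌋ - ⌊((0 : ℕ) - (r : ℚ)) / M⌋
  -- a difference of two floors is within one of the difference of their arguments
  have hD : |(D : ℚ) - N / M| < 1 := by
    have h1 := Int.floor_le (((N : ℚ) - r) / M)
    have h2 := Int.lt_floor_add_one (((N : ℚ) - r) / M)
    have h3 := Int.floor_le (((0 : ℕ) - (r : ℚ)) / M)
    have h4 := Int.lt_floor_add_one (((0 : ℕ) - (r : ℚ)) / M)
    have harg : ((N : ℚ) - r) / M - ((0 : ℕ) - (r : ℚ)) / M = N / M := by push_cast; ring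
    simp only [D, Int.cast_sub]
    rw [abs_lt]
    constructor <;> linarith
  have hD_nonneg : 0 ≤ D := by
    have : (-1 : ℚ) < D := by
      have := (abs_lt.1 hD).1
      have : (0 : ℚ) ≤ N / M := by positivity
      linarith
    have : (-1 : ℤ) < D := by exact_mod_cast this
    omega
  rw [max_eq_left hD_nonneg] at hcount
  have : |(((Finset.Icc 1 N).filter (fun n => n % M = r)).card : ℚ) - N / M| ≤ 1 := by
    rw [← Int.cast_natCast, hcount]; exact hD.le
  have hreal := (Rat.cast_le (K := ℝ)).2 this
  push_cast at hreal
  exact hreal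

theorem vanDerCorput_dyadicallyBalanced (N : ℕ) : DyadicallyBalanced vanDerCorput N := by
  intro k m hm
  obtain ⟨r, hr, rfl⟩ := (bitRev_bijOn k).surjOn (mem_Iio.2 hm)
  have hcount : pointCount vanDerCorput N (Ico (bitRev k r / 2 ^ k) ((bitRev k r + 1) / 2 ^ k))
      = ((Finset.Icc 1 N).filter (fun n => n % 2 ^ k = r)).card := by
    unfold pointCount
    congr 1
    ext n
    simp only [Finset.mem_filter, vanDerCorput_mem_dyadic_Ico_iff, and_congr_right_iff]
    intro _
    exact (bitRev_bijOn k).injOn.eq_iff (Nat.mod_lt _ (by positivity)) hr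
  rw [hcount]
  exact_mod_cast abs_card_filter_mod_eq_sub_div_le N hr

theorem discrepancy_vanDerCorput_le {N : ℕ} (hN : 0 < N) :
    discrepancy vanDerCorput N ≤ 2 * (Real.logb 2 N + 2) / N := by
  set k := Nat.log 2 N + 1
  have hN_lt : (N : ℝ) < 2 ^ k := by exact_mod_cast Nat.lt_pow_succ_log_self one_lt_two N
  have hk : (k : ℝ) ≤ Real.logb 2 N + 1 := by
    have := Real.natLog_le_logb N 2
    push_cast [k] at this ⊢
    linarith
  calc discrepancy vanDerCorput N ≤ 2 * (k + N / 2 ^ k) / N :=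
        discrepancy_le_of_dyadicallyBalanced vanDerCorput_mem_Ico
          (vanDerCorput_dyadicallyBalanced N) hN k
    _ ≤ 2 * (Real.logb 2 N + 2) / N := by
        have : (N : ℝ) / 2 ^ k < 1 := (div_lt_one (by positivity)).2 hN_lt
        gcongr 2 * ?_ / _
        linarith

/-- The van der Corput sequence in base 2 is a best-discrepancy sequence: there is
`c > 0` with `D_N ≤ c · N⁻¹ · log N` for all `N ≥ 2`; in particular, for every
`ε > 0` there is `c' > 0` with `D_N ≤ c' · N^(−1+ε)` for all `N ≥ 1`. -/
theorem vanDerCorput_best_discrepancy :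
    (∃ c : ℝ, 0 < c ∧ ∀ N : ℕ, 2 ≤ N →
      discrepancy vanDerCorput N ≤ c * (N : ℝ)⁻¹ * Real.log N)
    ∧ (∀ ε : ℝ, 0 < ε → ∃ c' : ℝ, 0 < c' ∧ ∀ N : ℕ, 1 ≤ N →
      discrepancy vanDerCorput N ≤ c' * (N : ℝ) ^ (-1 + ε)) := by
  have hlog2 : 0 < Real.log 2 := Real.log_pos one_lt_two
  refine ⟨⟨6 / Real.log 2, by positivity, fun N hN => ?_⟩,
    fun ε hε => ⟨2 / (ε * Real.log 2) + 4, by positivity, fun N hN => ?_⟩⟩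
  · have hlogb : 1 ≤ Real.logb 2 N := by
      rw [Real.le_logb_iff_rpow_le one_lt_two (by positivity), Real.rpow_one]
      exact_mod_cast hN
    calc discrepancy vanDerCorput N ≤ 2 * (Real.logb 2 N + 2) / N :=
          discrepancy_vanDerCorput_le (by omega)
      _ ≤ 6 * Real.logb 2 N / N := by gcongr ?_ / _; linarith
      _ = 6 / Real.log 2 * (N : ℝ)⁻¹ * Real.log N := by rw [Real.logb]; ring
  · have hN' : (0 : ℝ) < N := by exact_mod_cast hN
    have hlog : Real.log N ≤ (N : ℝ) ^ ε / ε := Real.log_le_rpow_div hN'.le hε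
    have hpow : 1 ≤ (N : ℝ) ^ ε := Real.one_le_rpow (by exact_mod_cast hN) hε.le
    calc discrepancy vanDerCorput N ≤ 2 * (Real.logb 2 N + 2) / N :=
          discrepancy_vanDerCorput_le (by omega)
      _ ≤ (2 / (ε * Real.log 2) + 4) * (N : ℝ) ^ ε / N := by
          gcongr ?_ / _
          have hlogb : Real.logb 2 N ≤ (N : ℝ) ^ ε / ε / Real.log 2 :=
            div_le_div_of_nonneg_right hlog hlog2.le
          have hc' : (2 / (ε * Real.log 2) + 4) * (N : ℝ) ^ ε
              = 2 * ((N : ℝ) ^ ε / ε / Real.log 2) + 4 * (N : ℝ) ^ ε := by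
            field_simp
          linarith
      _ = (2 / (ε * Real.log 2) + 4) * (N : ℝ) ^ (-1 + ε) := by
          rw [Real.rpow_add hN', Real.rpow_neg_one]; ring
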